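/- Let A = (A,·,∘) be a bi-skew brace with |A| ≥ 3. Then Aut(A) is non-trivial, i.e., there exists a bijection f : A → A with f ≠ id that is an automorphism of both (A,·) and (A,∘). -/
import Mathlib


/-- A skew brace structure on a group `A` (whose given group operation `*` plays the
role of the "additive" operation `·`): a second group operation `circ` with the same
identity element `1`, satisfying the brace relation
`a ∘ (b · c) = (a ∘ b) · a⁻¹ · (a ∘ c)`. -/
structure SkewBraceStruct (A : Type*) [Group A] where
  circ : A → A → A
  circInv : A → A
  circ_assoc : ∀ a b c, circ (circ a b) c = circ a (circ b c)
  one_circ : ∀ a, circ 1 a = a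
  circ_one : ∀ a, circ a 1 = a
  circInv_circ : ∀ a, circ (circInv a) a = 1
  brace : ∀ a b c, circ a (b * c) = circ a b * a⁻¹ * circ a c

/-- `f` is an automorphism of the skew brace: a bijection that is an automorphism of
both `(A, ·)` and `(A, ∘)`. -/
def SkewBraceStruct.IsAut {A : Type*} [Group A] (S : SkewBraceStruct A) (f : A → A) : Prop :=
  Function.Bijective f ∧ (∀ a b, f (a * b) = f a * f b) ∧
    (∀ a b, f (S.circ a b) = S.circ (f a) (f b))


theorem exp2_aut {V : Type*} [AddCommGroup V] (h2 : ∀ x : V, 2 • x = 0)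
    (a b : V) (ha : a ≠ 0) (hb : b ≠ 0) (hab : a ≠ b) :
    ∃ f : V → V, Function.Bijective f ∧ (∀ x y, f (x + y) = f x + f y) ∧ f ≠ id := by
  letI : Module (ZMod 2) V := AddCommGroup.zmodModule h2
  -- b ∉ span {a}
  have hbspan : b ∉ Submodule.span (ZMod 2) {a} := by
    rw [Submodule.mem_span_singleton]
    rintro ⟨c, hc⟩
    rcases (show ∀ t : ZMod 2, t = 0 ∨ t = 1 from by decide) c with rfl | rfl
    · rw [zero_smul] at hc; exact hb hc.symm
    · rw [one_smul] at hc; exact hab hc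
  set W := V ⧸ Submodule.span (ZMod 2) {a}
  have hbW : (Submodule.Quotient.mk b : W) ≠ 0 := by
    simpa [Submodule.Quotient.mk_eq_zero] using hbspan
  obtain ⟨ψ, hψ⟩ : ∃ ψ : Module.Dual (ZMod 2) W, ψ (Submodule.Quotient.mk b) ≠ 0 := by
    by_contra h
    push_neg at h
    exact hbW ((Module.forall_dual_apply_eq_zero_iff (ZMod 2) _).mp h)
  set φ : V →ₗ[ZMod 2] ZMod 2 := ψ.comp (Submodule.span (ZMod 2) {a}).mkQ with hφ
  have hφa : φ a = 0 := by
    have : (Submodule.span (ZMod 2) {a}).mkQ a = 0 := by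
      rw [Submodule.mkQ_apply, Submodule.Quotient.mk_eq_zero]
      exact Submodule.mem_span_singleton_self a
    simp [hφ, this]
  refine ⟨fun x => x + φ x • a, ?_, ?_, ?_⟩
  · have hinv : ∀ x, (fun x => x + φ x • a) ((fun x => x + φ x • a) x) = x := by
      intro x
      simp only [map_add, map_smul, hφa, smul_eq_mul, mul_zero, add_zero]
      rw [add_assoc, ← add_smul]
      have : φ x + φ x = 0 := by
        have := h2 (φ x • a); rw [two_nsmul, ← add_smul] at this
        rw [show φ x + φ x = (2 : ZMod 2) * φ x by ring, show (2 : ZMod 2) = 0 by decide]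
        ring
      rw [this, zero_smul, add_zero]
    exact Function.bijective_iff_has_inverse.mpr ⟨_, fun x => hinv x, fun x => hinv x⟩
  · intro x y; simp only [map_add, add_smul]; abel
  · intro h
    have := congrFun h b
    simp only [id] at this
    have hφb : φ b ≠ 0 := hψ
    have hba : φ b • a = 0 := by
      have := congrArg (fun t => t - b) this
      simpa [add_sub_cancel_left] using this
    have h1 : φ b = 1 := by
      rcases (show ∀ t : ZMod 2, t = 0 ∨ t = 1 from by decide) (φ b) with h0 | h0
      · exact absurd h0 hφb
      · exact h0
    rw [h1, one_smul] at hba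
    exact ha hba

/-- Any group with at least 3 elements has a nontrivial automorphism. -/
theorem group_aut_nontrivial {A : Type*} [Group A]
    (hcard : ∃ x y z : A, x ≠ y ∧ x ≠ z ∧ y ≠ z) :
    ∃ f : A → A, Function.Bijective f ∧ (∀ a b, f (a * b) = f a * f b) ∧ f ≠ id := by
  by_cases hcomm : ∀ x y : A, x * y = y * x
  · by_cases hexp : ∀ x : A, x * x = 1
    · -- elementary abelian 2-group: use exp2_aut on Additive A
      letI : AddCommGroup (Additive A) :=
        { (inferInstance : AddGroup (Additive A)) with
          add_comm := fun x y => hcomm x.toMul y.toMul }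
      have h2 : ∀ x : Additive A, 2 • x = 0 := by
        intro x; rw [two_nsmul]; exact hexp x.toMul
      -- pick two distinct non-identity elements
      obtain ⟨x, y, z, hxy, hxz, hyz⟩ := hcard
      obtain ⟨a, b, ha, hb, hab⟩ : ∃ a b : A, a ≠ 1 ∧ b ≠ 1 ∧ a ≠ b := by
        by_cases hx : x = 1
        · refine ⟨y, z, ?_, ?_, hyz⟩
          · intro h; rw [hx] at hxy; exact hxy h.symm
          · intro h; rw [hx] at hxz; exact hxz h.symm
        · by_cases hy : y = 1
          · refine ⟨x, z, hx, ?_, hxz⟩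
            intro h; rw [hy] at hyz; exact hyz h.symm
          · exact ⟨x, y, hx, hy, hxy⟩
      obtain ⟨f, hbij, hadd, hne⟩ := exp2_aut h2 (Additive.ofMul a) (Additive.ofMul b)
        ha hb hab
      exact ⟨f, hbij, hadd, hne⟩
    · -- abelian, some element of order > 2: inversion
      push_neg at hexp
      obtain ⟨a, ha⟩ := hexp
      refine ⟨fun x => x⁻¹, ⟨fun x y h => by simpa using congrArg Inv.inv h,
        fun x => ⟨x⁻¹, inv_inv x⟩⟩, fun x y => by show (x*y)⁻¹ = x⁻¹ * y⁻¹; rw [mul_inv_rev, hcomm], ?_⟩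
      intro h
      have := congrFun h a
      simp only [id] at this
      apply ha
      calc a * a = a * a⁻¹ := by rw [this]
        _ = 1 := mul_inv_cancel a
  · -- nonabelian: conjugation
    push_neg at hcomm
    obtain ⟨g, x, hgx⟩ := hcomm
    refine ⟨fun y => g * y * g⁻¹, ⟨fun y z h => by
        simpa using h, fun y => ⟨g⁻¹ * y * g, by group⟩⟩,
      fun y z => by group, ?_⟩
    intro h
    have := congrFun h x
    simp only [id] at this
    exact hgx (mul_inv_eq_iff_eq_mul.mp this)

namespace SkewBraceStruct

variable {A : Type*} [Group A] (S : SkewBraceStruct A)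

theorem circ_circInv (a : A) : S.circ a (S.circInv a) = 1 := by
  set i := S.circInv a
  calc S.circ a i = S.circ (S.circ (S.circInv i) i) (S.circ a i) := by
        rw [S.circInv_circ, S.one_circ]
    _ = S.circ (S.circInv i) (S.circ (S.circ i a) i) := by
        rw [S.circ_assoc, S.circ_assoc]
    _ = 1 := by rw [S.circInv_circ, S.one_circ, S.circInv_circ]

theorem circ_inv (a b : A) : S.circ a b⁻¹ = a * (S.circ a b)⁻¹ * a := by
  have h := S.brace a b b⁻¹
  rw [mul_inv_cancel, S.circ_one] at h
  have : S.circ a b * a⁻¹ * S.circ a b⁻¹ = a := h.symm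
  calc S.circ a b⁻¹ = a * (S.circ a b)⁻¹ * (S.circ a b * a⁻¹ * S.circ a b⁻¹) := by group
    _ = a * (S.circ a b)⁻¹ * a := by rw [this]

/-- The lambda map of the skew brace. -/
def lam (a x : A) : A := a⁻¹ * S.circ a x

theorem lam_one_left (x : A) : S.lam 1 x = x := by simp [lam, S.one_circ]

theorem lam_mul (a x y : A) : S.lam a (x * y) = S.lam a x * S.lam a y := by
  simp only [lam, S.brace]; group

theorem lam_comp (a b x : A) : S.lam (S.circ a b) x = S.lam a (S.lam b x) := by
  simp only [lam]
  rw [S.brace, S.circ_inv, ← S.circ_assoc]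
  group

theorem lam_bijective (a : A) : Function.Bijective (S.lam a) := by
  refine Function.bijective_iff_has_inverse.mpr ⟨S.lam (S.circInv a), fun x => ?_, fun x => ?_⟩
  · rw [← S.lam_comp, S.circInv_circ, S.lam_one_left]
  · rw [← S.lam_comp, S.circ_circInv, S.lam_one_left]

theorem lam_circ (hbi : ∀ a b c : A, a * S.circ b c = S.circ (S.circ (a * b) (S.circInv a)) (a * c))
    (a x y : A) : S.lam a (S.circ x y) = S.circ (S.lam a x) (S.lam a y) := by
  have key : ∀ y : A, S.circ (S.circInv a⁻¹) (a⁻¹ * y) = a⁻¹ * S.circ a y := by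
    intro y
    have h := hbi a⁻¹ a y
    rw [inv_mul_cancel, S.one_circ] at h
    exact h.symm
  calc S.lam a (S.circ x y) = a⁻¹ * S.circ (S.circ a x) y := by
        rw [lam, S.circ_assoc]
    _ = S.circ (S.circ (a⁻¹ * S.circ a x) (S.circInv a⁻¹)) (a⁻¹ * y) := hbi a⁻¹ (S.circ a x) y
    _ = S.circ (S.lam a x) (S.circ (S.circInv a⁻¹) (a⁻¹ * y)) := by rw [S.circ_assoc]; rfl
    _ = S.circ (S.lam a x) (S.lam a y) := by rw [key]; rfl

end SkewBraceStruct

/-- A bi-skew brace of order at least `3` has a non-trivial automorphism group. -/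
theorem biSkewBrace_aut_nontrivial {A : Type*} [Group A] (S : SkewBraceStruct A)
    (hbi : ∀ a b c : A, a * S.circ b c = S.circ (S.circ (a * b) (S.circInv a)) (a * c))
    (hcard : ∃ x y z : A, x ≠ y ∧ x ≠ z ∧ y ≠ z) :
    ∃ f : A → A, S.IsAut f ∧ f ≠ id := by
  by_cases htriv : ∀ a b : A, S.circ a b = a * b
  · obtain ⟨f, hbij, hmul, hne⟩ := group_aut_nontrivial hcard
    exact ⟨f, ⟨hbij, hmul, fun a b => by rw [htriv, htriv, hmul]⟩, hne⟩
  · push_neg at htriv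
    obtain ⟨a, b, hab⟩ := htriv
    refine ⟨S.lam a, ⟨S.lam_bijective a, S.lam_mul a, S.lam_circ hbi a⟩, ?_⟩
    intro h
    have hb : a⁻¹ * S.circ a b = b := congrFun h b
    apply hab
    calc S.circ a b = a * (a⁻¹ * S.circ a b) := by group
      _ = a * b := by rw [hb]
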